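/- Fix β > 0 and an integer j ≥ 0, and set b = β(j+1)/2. Let γ = √X·e^{iΘ}, where X and Θ are independent, X has density x ↦ b·(1−x)^{b−1} on [0,1], and Θ is uniform on [0,2π). Then for all real s, t satisfying 8·(t² + s²)/(1 + β(j+1))² < 1, one has E[ exp( t·Re(γ²) + s·Im(γ²) ) ] ≤ exp( 8·(t² + s²) / (1 + β(j+1))² ). -/

import Mathlib

/-!
Writing `γ = √x e^{iθ}`, the exponent is `x (t cos 2θ + s sin 2θ)`, which changes sign under
`θ ↦ θ + π/2`. Averaging over `θ` therefore kills the `sinh` part of the exponential and leaves at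
most `cosh (r x)` with `r = √(t² + s²)`. Expanding `cosh` and using the Beta moments
`E[X^n] = n! / ((b+1)⋯(b+n)) ≤ n! / (b+1)^n` bounds the radial average by the geometric series
`∑ ρ^k = 1 / (1 - ρ)`, `ρ = r² / (b+1)²`. Finally `1 / (1 - ρ) ≤ e^{2ρ}` for `ρ ≤ 1/2`, and
`2ρ ≤ 8 r² / (2b+1)²`.
-/

open MeasureTheory

/-- The expectation `E[F(γ)]` where `γ = √X e^{iΘ}`, `X` has density
`x ↦ b (1−x)^{b−1}` on `[0,1]` and `Θ` is uniform on `[0,2π)`, independent: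
`∫₀¹ ∫₀^{2π} F(√x e^{iθ}) (b/(2π)) (1−x)^{b−1} dθ dx`. -/
noncomputable def verblunskyExp (b : ℝ) (F : ℂ → ℝ) : ℝ :=
  ∫ x in Set.Icc (0:ℝ) 1, ∫ θ in Set.Ico (0:ℝ) (2 * Real.pi),
    F ((Real.sqrt x : ℂ) * Complex.exp (Complex.I * (θ : ℝ))) *
      (b / (2 * Real.pi) * (1 - x) ^ (b - 1))

open Real intervalIntegral Function
open scoped Nat

theorem Function.Antiperiodic.intervalIntegral_eq_zero {f : ℝ → ℝ} {c T : ℝ}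
    (hc : Antiperiodic f c) (hT : Periodic f T) (t : ℝ) : ∫ x in t..t + T, f x = 0 := by
  have hshift : ∫ x in t..t + T, f (x + c) = ∫ x in t..t + T, f x := by
    rw [integral_comp_add_right, add_right_comm, hT.intervalIntegral_add_eq]
  simp only [hc _, intervalIntegral.integral_neg] at hshift
  linarith

theorem intervalIntegral_exp_le_mul_cosh {g : ℝ → ℝ} {c T M : ℝ} (hg : Continuous g)
    (hc : Antiperiodic g c) (hT : Periodic g T) (hT0 : 0 ≤ T) (hM : ∀ x, |g x| ≤ M) (t : ℝ) :
    ∫ x in t..t + T, exp (g x) ≤ T * cosh M := by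
  have hsinh : ∫ x in t..t + T, sinh (g x) = 0 :=
    Antiperiodic.intervalIntegral_eq_zero (f := fun x => sinh (g x)) (c := c)
      (fun x => by simp only [hc x, sinh_neg]) (hT.comp sinh) t
  have hcosh : ∫ x in t..t + T, cosh (g x) ≤ ∫ _ in t..t + T, cosh M :=
    integral_mono_on (by linarith) ((by fun_prop : Continuous _).intervalIntegrable _ _)
      intervalIntegrable_const fun x _ => cosh_le_cosh.2 ((hM x).trans (le_abs_self M))
  simp only [← cosh_add_sinh]
  rw [intervalIntegral.integral_add ((by fun_prop : Continuous _).intervalIntegrable _ _)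
    ((by fun_prop : Continuous _).intervalIntegrable _ _), hsinh, add_zero]
  simpa using hcosh

theorem abs_mul_cos_add_mul_sin_le (t s ψ : ℝ) :
    |t * cos ψ + s * sin ψ| ≤ √(t ^ 2 + s ^ 2) :=
  abs_le_sqrt <| by nlinarith [sin_sq_add_cos_sq ψ, sq_nonneg (t * sin ψ - s * cos ψ)]

theorem sq_ofReal_sqrt_mul_exp_I_mul {x : ℝ} (hx : 0 ≤ x) (θ : ℝ) :
    ((√x : ℂ) * Complex.exp (Complex.I * θ)) ^ 2 = x * Complex.exp ((2 * θ : ℝ) * Complex.I) := by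
  rw [mul_pow, ← Complex.ofReal_pow, sq_sqrt hx, ← Complex.exp_nat_mul]
  push_cast; ring_nf

theorem setIntegral_exp_sq_le (t s : ℝ) {x : ℝ} (hx : 0 ≤ x) :
    ∫ θ in Set.Ico 0 (2 * π), exp (t * (((√x : ℂ) * Complex.exp (Complex.I * θ)) ^ 2).re
        + s * (((√x : ℂ) * Complex.exp (Complex.I * θ)) ^ 2).im)
      ≤ 2 * π * cosh (√(t ^ 2 + s ^ 2) * x) := by
  set g : ℝ → ℝ := fun θ => x * (t * cos (2 * θ) + s * sin (2 * θ))
  have hanti : Antiperiodic g (π / 2) := fun θ => by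
    simp only [g, show 2 * (θ + π / 2) = 2 * θ + π by ring, cos_add_pi, sin_add_pi]; ring
  have hperiod : Periodic g (2 * π) := by
    simpa [mul_div_cancel₀] using hanti.periodic_two_mul.nat_mul 2
  have hbound : ∀ θ, |g θ| ≤ √(t ^ 2 + s ^ 2) * x := fun θ => by
    rw [abs_mul, abs_of_nonneg hx, mul_comm]
    exact mul_le_mul_of_nonneg_right (abs_mul_cos_add_mul_sin_le t s _) hx
  calc _ = ∫ θ in (0)..0 + 2 * π, exp (g θ) := by
        rw [zero_add, integral_of_le two_pi_pos.le, integral_Ioc_eq_integral_Ioo,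
          ← integral_Ico_eq_integral_Ioo]
        congr 1; funext θ
        simp only [sq_ofReal_sqrt_mul_exp_I_mul hx, Complex.re_ofReal_mul, Complex.im_ofReal_mul,
          Complex.exp_ofReal_mul_I_re, Complex.exp_ofReal_mul_I_im, g]
        congr 1; ring
    _ ≤ _ := intervalIntegral_exp_le_mul_cosh (by fun_prop) hanti hperiod two_pi_pos.le hbound 0

theorem intervalIntegral_pow_mul_one_sub_rpow (n : ℕ) {b : ℝ} (hb : 0 < b) :
    ∫ x in (0 : ℝ)..1, x ^ n * (1 - x) ^ (b - 1) = n ! / ∏ j ∈ Finset.range (n + 1), (b + j) := by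
  apply Complex.ofReal_injective
  push_cast
  rw [← Complex.betaIntegral_eval_nat_add_one_right (by simpa using hb), Complex.betaIntegral_symm,
    Complex.betaIntegral, ← intervalIntegral.integral_ofReal]
  refine integral_congr fun x hx => ?_
  rw [Set.uIcc_of_le zero_le_one] at hx
  push_cast
  rw [Complex.ofReal_cpow (by linarith [hx.2])]
  push_cast
  rw [add_sub_cancel_right, Complex.cpow_natCast]

theorem intervalIntegral_pow_mul_le {b : ℝ} (hb : 0 < b) (n : ℕ) :
    ∫ x in (0 : ℝ)..1, x ^ n * (b * (1 - x) ^ (b - 1)) ≤ n ! / (b + 1) ^ n := by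
  have hprod : (b + 1) ^ n ≤ ∏ j ∈ Finset.range n, (b + (j + 1 : ℕ)) := by
    simpa using Finset.prod_le_prod (s := Finset.range n) (f := fun _ => b + 1)
      (fun _ _ => by positivity) (fun j _ => by linarith [(j.cast_nonneg : (0 : ℝ) ≤ j)])
  simp_rw [mul_left_comm _ b]
  rw [intervalIntegral.integral_const_mul, intervalIntegral_pow_mul_one_sub_rpow n hb,
    Finset.prod_range_succ', Nat.cast_zero, add_zero, mul_div_assoc', mul_comm _ b,
    ← div_div, mul_div_cancel_left₀ _ hb.ne']
  exact div_le_div_of_nonneg_left (by positivity) (by positivity) hprod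

theorem integrableOn_mul_one_sub_rpow {b : ℝ} (hb : 0 < b) {g : ℝ → ℝ} (hg : Continuous g) :
    IntegrableOn (fun x => g x * (b * (1 - x) ^ (b - 1))) (Set.Ioc 0 1) := by
  have hw : IntervalIntegrable (fun x : ℝ => (1 - x) ^ (b - 1)) volume 0 1 := by
    simpa using ((intervalIntegrable_rpow' (a := 0) (b := 1) (r := b - 1)
      (by linarith)).comp_sub_left 1).symm
  exact ((hw.const_mul b).continuousOn_mul hg.continuousOn).1

theorem intervalIntegral_cosh_mul_le {b y : ℝ} (hb : 0 < b) (hy : y ^ 2 < (b + 1) ^ 2) :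
    ∫ x in (0 : ℝ)..1, cosh (y * x) * (b * (1 - x) ^ (b - 1)) ≤ (1 - (y / (b + 1)) ^ 2)⁻¹ := by
  set ρ := (y / (b + 1)) ^ 2
  set F : ℕ → ℝ → ℝ := fun k x => (y * x) ^ (2 * k) / (2 * k)! * (b * (1 - x) ^ (b - 1))
  have hF_int : ∀ k, IntegrableOn (F k) (Set.Ioc 0 1) := fun k =>
    integrableOn_mul_one_sub_rpow hb (by fun_prop)
  have hF_nonneg : ∀ k, ∀ x ∈ Set.Ioc (0 : ℝ) 1, 0 ≤ F k x := fun k x hx => by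
    have : 0 ≤ (1 - x) ^ (b - 1) := rpow_nonneg (by linarith [hx.2]) _
    have := (even_two_mul k).pow_nonneg (y * x)
    positivity
  have hF_le : ∀ k, ∫ x in Set.Ioc 0 1, F k x ≤ ρ ^ k := fun k => by
    have h := intervalIntegral_pow_mul_le hb (2 * k)
    rw [integral_of_le zero_le_one] at h
    calc ∫ x in Set.Ioc 0 1, F k x
        = y ^ (2 * k) / (2 * k)! * ∫ x in Set.Ioc 0 1, x ^ (2 * k) * (b * (1 - x) ^ (b - 1)) := by
          rw [← MeasureTheory.integral_const_mul]; congr 1; funext x; simp only [F]; ring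
      _ ≤ y ^ (2 * k) / (2 * k)! * ((2 * k)! / (b + 1) ^ (2 * k)) := by
          have := (even_two_mul k).pow_nonneg y
          gcongr
      _ = ρ ^ k := by rw [← pow_mul, div_pow]; field_simp
  have hF_norm : ∀ k, ∫ x in Set.Ioc 0 1, ‖F k x‖ = ∫ x in Set.Ioc 0 1, F k x := fun k =>
    setIntegral_congr_fun measurableSet_Ioc fun x hx => norm_of_nonneg (hF_nonneg k x hx)
  have hρ : ρ < 1 := by simpa only [ρ, div_pow] using (div_lt_one (by positivity)).2 hy
  have hsum := hasSum_integral_of_summable_integral_norm hF_int <|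
    (summable_geometric_of_lt_one (by positivity) hρ).of_nonneg_of_le
      (fun k => by rw [hF_norm]; exact setIntegral_nonneg measurableSet_Ioc (hF_nonneg k))
      (fun k => (hF_norm k).trans_le (hF_le k))
  have hcosh : ∀ x, ∑' k, F k x = cosh (y * x) * (b * (1 - x) ^ (b - 1)) := fun x =>
    ((hasSum_cosh (y * x)).mul_right _).tsum_eq
  rw [integral_of_le zero_le_one, ← funext hcosh]
  exact hasSum_le hF_le hsum (hasSum_geometric_of_lt_one (by positivity) hρ)

theorem verblunskyExp_le {b : ℝ} (hb : 0 < b) {F : ℂ → ℝ} {G : ℝ → ℝ} (hF : 0 ≤ F)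
    (hG : Continuous G)
    (hFG : ∀ x ∈ Set.Icc (0 : ℝ) 1,
      ∫ θ in Set.Ico 0 (2 * π), F (√x * Complex.exp (Complex.I * θ)) ≤ 2 * π * G x) :
    verblunskyExp b F ≤ ∫ x in (0 : ℝ)..1, G x * (b * (1 - x) ^ (b - 1)) := by
  have hw : ∀ x ∈ Set.Icc (0 : ℝ) 1, 0 ≤ (1 - x) ^ (b - 1) := fun x hx =>
    rpow_nonneg (by linarith [hx.2]) _
  rw [verblunskyExp, integral_of_le zero_le_one, ← integral_Icc_eq_integral_Ioc]
  refine integral_mono_of_nonneg ?_ ?_ ?_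
  · filter_upwards [ae_restrict_mem measurableSet_Icc] with x hx
    have := hw x hx
    exact integral_nonneg fun θ => mul_nonneg (hF _) (by positivity)
  · exact (integrableOn_Icc_iff_integrableOn_Ioc
      (f := fun x => G x * (b * (1 - x) ^ (b - 1)))).2 (integrableOn_mul_one_sub_rpow hb hG)
  · filter_upwards [ae_restrict_mem measurableSet_Icc] with x hx
    have := hw x hx
    calc _ = (∫ θ in Set.Ico 0 (2 * π), F (√x * Complex.exp (Complex.I * θ)))
          * (b / (2 * π) * (1 - x) ^ (b - 1)) := integral_mul_const _ _
      _ ≤ 2 * π * G x * (b / (2 * π) * (1 - x) ^ (b - 1)) := by gcongr; exact hFG x hx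
      _ = G x * (b * (1 - x) ^ (b - 1)) := by field_simp

theorem inv_one_sub_le_exp_two_mul {ρ : ℝ} (h0 : 0 ≤ ρ) (h1 : ρ ≤ 1 / 2) :
    (1 - ρ)⁻¹ ≤ exp (2 * ρ) := by
  rw [inv_le_iff_one_le_mul₀ (by linarith)]
  nlinarith [add_one_le_exp (2 * ρ)]

/-- Subgaussianity of the square of a deformed Verblunsky coefficient `γ` of the CβE:
if `8(t²+s²)/(1+β(j+1))² < 1` then
`E[exp(t Re(γ²) + s Im(γ²))] ≤ exp(8(t²+s²)/(1+β(j+1))²)`. -/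
theorem verblunsky_sq_subgaussian (β : ℝ) (hβ : 0 < β) (j : ℕ) (s t : ℝ)
    (hst : 8 * (t ^ 2 + s ^ 2) / (1 + β * (j + 1)) ^ 2 < 1) :
    verblunskyExp (β * (j + 1) / 2)
        (fun γ => Real.exp (t * (γ ^ 2).re + s * (γ ^ 2).im))
      ≤ Real.exp (8 * (t ^ 2 + s ^ 2) / (1 + β * (j + 1)) ^ 2) := by
  set b := β * (j + 1) / 2
  have hb : 0 < b := by positivity
  rw [show 1 + β * (j + 1) = 2 * b + 1 by ring] at hst ⊢
  set r := √(t ^ 2 + s ^ 2)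
  have hρ : 2 * (r / (b + 1)) ^ 2 ≤ 8 * (t ^ 2 + s ^ 2) / (2 * b + 1) ^ 2 := by
    rw [div_pow, sq_sqrt (by positivity), mul_div_assoc',
      show (b + 1) ^ 2 = (2 * b + 2) ^ 2 / 4 by ring, div_div_eq_mul_div]
    gcongr ?_ / ?_ <;> linarith
  have hρ_half : (r / (b + 1)) ^ 2 < 1 / 2 := by linarith
  calc verblunskyExp b (fun γ => exp (t * (γ ^ 2).re + s * (γ ^ 2).im))
    _ ≤ ∫ x in (0 : ℝ)..1, cosh (r * x) * (b * (1 - x) ^ (b - 1)) :=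
        verblunskyExp_le hb (fun _ => (exp_pos _).le) (by fun_prop)
          fun x hx => setIntegral_exp_sq_le t s hx.1
    _ ≤ (1 - (r / (b + 1)) ^ 2)⁻¹ := intervalIntegral_cosh_mul_le hb
      (by rw [← div_lt_one (by positivity), ← div_pow]; linarith)
    _ ≤ exp (2 * (r / (b + 1)) ^ 2) := inv_one_sub_le_exp_two_mul (by positivity) hρ_half.le
    _ ≤ _ := exp_le_exp.2 hρ
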